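/- Let n, m ∈ ℕ with m ≥ n and let f : I → ℝ^n be an m-times continuously differentiable function such that its Wronskian W_f is nonvanishing on I. Define a = (a_1, ..., a_n) : I → ℝ^n by a_j := Φ_f^{[n−j]} for j ∈ {1, ..., n}, and define X_a := (a | e_1 | ... | e_{n−1}). Then for every k = (k_1, ..., k_n) ∈ ℕ₀^n with k_i ≤ m for all i, setting ℓ_i := max(k_i − n + 1, 0), one has on I: W_f^k = W_f · det( B_{ℓ_1}(X_a, ..., X_a^{(ℓ_1−1)}) e_{n+ℓ_1−k_1} | ... | B_{ℓ_n}(X_a, ..., X_a^{(ℓ_n−1)}) e_{n+ℓ_n−k_n} ). -/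

import Mathlib

open Matrix

/-- Noncommutative complete Bell polynomials: `B_0 = I_n`,
`B_{m+1}(X_1,…,X_{m+1}) = ∑_{j=0}^m C(m,j) B_j(X_1,…,X_j) X_{m+1-j}`.
Here `X : Fin m → _` with `X i` playing the role of `X_{i+1}`. -/
noncomputable def Bell {n : ℕ} :
    (m : ℕ) → (Fin m → Matrix (Fin n) (Fin n) ℝ) → Matrix (Fin n) (Fin n) ℝ
  | 0, _ => 1
  | m + 1, X => ∑ j : Fin (m + 1),
      (Nat.choose m (j : ℕ) : ℝ) •
        (Bell (j : ℕ) (fun i : Fin (j : ℕ) => X (Fin.castLE (by omega) i)) *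
          X ⟨m - (j : ℕ), by omega⟩)

/-- Entrywise `k`-th derivative (within `I`) of a matrix-valued function. -/
noncomputable def matD {n : ℕ} (I : Set ℝ) (X : ℝ → Matrix (Fin n) (Fin n) ℝ) (k : ℕ)
    (x : ℝ) : Matrix (Fin n) (Fin n) ℝ :=
  Matrix.of fun p q => iteratedDerivWithin k (fun t => X t p q) I x

/-- `B_j(X, X', …, X^{(j-1)})` evaluated at `x` (derivatives within `I`). -/
noncomputable def BellD {n : ℕ} (I : Set ℝ) (X : ℝ → Matrix (Fin n) (Fin n) ℝ) (j : ℕ)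
    (x : ℝ) : Matrix (Fin n) (Fin n) ℝ :=
  Bell j (fun i : Fin j => matD I X (i : ℕ) x)

/-- Generalized Wronskian `W_f^k = det(f^{(k_1)} | … | f^{(k_n)})` (derivatives within `I`). -/
noncomputable def genW {n : ℕ} (I : Set ℝ) (f : ℝ → Fin n → ℝ) (k : Fin n → ℕ) (x : ℝ) : ℝ :=
  Matrix.det (Matrix.of fun p q => iteratedDerivWithin (k q) (fun t => f t p) I x)

/-- The multi-index `(n-1, n-2, …, 1, 0)` of the ordinary Wronskian. -/
def wIdx (n : ℕ) : Fin n → ℕ := fun q => n - 1 - (q : ℕ)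

/-- The multi-index `(n+d, n-1, …, j+1, j-1, …, 1, 0)`. -/
def dIdx (n d j : ℕ) : Fin n → ℕ :=
  fun q => if (q : ℕ) = 0 then n + d
    else if j < n - (q : ℕ) then n - (q : ℕ) else n - (q : ℕ) - 1

/-- `Φ_f^{[j]} = (-1)^{n-j-1} W_f^{(n,n-1,…,j+1,j-1,…,0)} / W_f`. -/
noncomputable def Phi {n : ℕ} (I : Set ℝ) (f : ℝ → Fin n → ℝ) (j : ℕ) (x : ℝ) : ℝ :=
  (-1 : ℝ) ^ (n - j - 1) * genW I f (dIdx n 0 j) x / genW I f (wIdx n) x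

/-- The `1`-indexed standard basis vector `e_i` of `ℝ^n`. -/
def stdB (n i : ℕ) : Fin n → ℝ := fun p => if (p : ℕ) + 1 = i then 1 else 0

/-- The matrix `X_a = (a | e_1 | … | e_{n-1})`. -/
def colMat {n : ℕ} (a : ℝ → Fin n → ℝ) (x : ℝ) : Matrix (Fin n) (Fin n) ℝ :=
  Matrix.of fun p q =>
    if (q : ℕ) = 0 then a x p else if (p : ℕ) + 1 = (q : ℕ) then 1 else 0

/-- The matrix `Y_f = (f^{(n-1)} | … | f' | f)` (derivatives within `I`). -/
noncomputable def Yfun {n : ℕ} (I : Set ℝ) (f : ℝ → Fin n → ℝ) (x : ℝ) :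
    Matrix (Fin n) (Fin n) ℝ :=
  Matrix.of fun p q => iteratedDerivWithin (n - 1 - (q : ℕ)) (fun t => f t p) I x

/-- The `1`-indexed component `a_i` of `a : I → ℝ^n`, with `a_i := 0` for `i > n`. -/
noncomputable def aExt {n : ℕ} (a : ℝ → Fin n → ℝ) (i : ℕ) : ℝ → ℝ :=
  fun t => if h : i - 1 < n then a t ⟨i - 1, h⟩ else 0

/-- `y` is an `n`-times differentiable (on `I`) solution of
`y^{(n)} = a_1 y^{(n-1)} + ⋯ + a_n y`, where `a i` is `a_{i+1}`. -/
def SolvesDE {n : ℕ} (I : Set ℝ) (a : ℝ → Fin n → ℝ) (y : ℝ → ℝ) : Prop :=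
  (∀ k < n, DifferentiableOn ℝ (iteratedDerivWithin k y I) I) ∧
    ∀ x ∈ I, iteratedDerivWithin n y I x =
      ∑ i : Fin n, a x i * iteratedDerivWithin (n - 1 - (i : ℕ)) y I x

/-- `f : I → ℝ^n` is a fundamental system of solutions of
`y^{(n)} = a_1 y^{(n-1)} + ⋯ + a_n y`: each component solves the equation and the
components are linearly independent functions on `I`. -/
def FundSystem {n : ℕ} (I : Set ℝ) (a : ℝ → Fin n → ℝ) (f : ℝ → Fin n → ℝ) : Prop :=
  (∀ p : Fin n, SolvesDE I a fun t => f t p) ∧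
    LinearIndependent ℝ fun p : Fin n => I.restrict fun t => f t p

/-! Write `Y = (f^{(n-1)} | ⋯ | f' | f)` and `X = X_a`. Cramer's rule says that `Y a = f^{(n)}`,
which is what makes `Φ_f` the coefficients of the linear ODE solved by `f`; since the other
columns of `Y` just shift under differentiation, `Y' = Y X`. Leibniz's rule applied to
`Y^{(m+1)} = (Y X)^{(m)}` reproduces the recursion of the Bell polynomials, so
`Y^{(ℓ)} = Y B_ℓ(X, …, X^{(ℓ-1)})`. Every `f^{(k)}` is a column of some `Y^{(ℓ)}`, namely
`Y^{(ℓ)} e_{n+ℓ-k}` with `ℓ = max(k-n+1, 0)`, so the matrix of the `f^{(k_i)}` is `Y` times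
the matrix of the `B_{ℓ_i} e_{n+ℓ_i-k_i}`, and the determinant is multiplicative. -/

section IteratedDeriv

variable {𝕜 F : Type*} [NontriviallyNormedField 𝕜] [NormedAddCommGroup F] [NormedSpace 𝕜 F]
  {f : 𝕜 → F} {s : Set 𝕜}

theorem iteratedDerivWithin_iteratedDerivWithin (a b : ℕ) :
    iteratedDerivWithin a (iteratedDerivWithin b f s) s = iteratedDerivWithin (a + b) f s := by
  have hb : iteratedDerivWithin b f s = (derivWithin · s)^[b] f :=
    funext fun _ => iteratedDerivWithin_eq_iterate
  ext x
  rw [iteratedDerivWithin_eq_iterate, iteratedDerivWithin_eq_iterate, hb,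
    Function.iterate_add_apply]

theorem ContDiffOn.iteratedDerivWithin {N M r : ℕ} (hf : ContDiffOn 𝕜 N f s)
    (hs : UniqueDiffOn 𝕜 s) (h : M + r ≤ N) :
    ContDiffOn 𝕜 M (iteratedDerivWithin r f s) s := by
  induction r generalizing M with
  | zero => simpa using hf.of_le (by exact_mod_cast h)
  | succ r ih =>
    rw [iteratedDerivWithin_succ]
    exact (ih (M := M + 1) (by omega)).derivWithin hs (by exact_mod_cast le_rfl)

end IteratedDeriv

theorem contDiffOn_det {𝕜 ι : Type*} [NontriviallyNormedField 𝕜] [Fintype ι]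
    [DecidableEq ι] {N : WithTop ℕ∞} {s : Set 𝕜} {A : 𝕜 → Matrix ι ι 𝕜}
    (hA : ∀ p q, ContDiffOn 𝕜 N (fun t => A t p q) s) :
    ContDiffOn 𝕜 N (fun t => (A t).det) s := by
  simp only [det_apply']
  exact .sum fun σ _ => contDiffOn_const.mul (contDiffOn_prod fun i _ => hA (σ i) i)

section MatrixDeriv

variable {n : ℕ} {s : Set ℝ}

theorem matD_zero (Y : ℝ → Matrix (Fin n) (Fin n) ℝ) : matD s Y 0 = Y := by
  ext x p q
  simp [matD]

theorem matD_matD (Y : ℝ → Matrix (Fin n) (Fin n) ℝ) (a b : ℕ) :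
    matD s (matD s Y b) a = matD s Y (a + b) := by
  ext x p q
  simp only [matD, of_apply]
  rw [← iteratedDerivWithin_iteratedDerivWithin]

theorem matD_congr {A B : ℝ → Matrix (Fin n) (Fin n) ℝ} (h : Set.EqOn A B s) (m : ℕ) :
    Set.EqOn (matD s A m) (matD s B m) s := by
  intro x hx
  ext p q
  exact iteratedDerivWithin_congr (fun t ht => congrFun₂ (h ht) p q) hx

theorem matD_mul {A B : ℝ → Matrix (Fin n) (Fin n) ℝ} {m : ℕ} {x : ℝ}
    (hs : UniqueDiffOn ℝ s) (hx : x ∈ s)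
    (hA : ∀ p q, ContDiffWithinAt ℝ m (fun t => A t p q) s x)
    (hB : ∀ p q, ContDiffWithinAt ℝ m (fun t => B t p q) s x) :
    matD s (fun t => A t * B t) m x = ∑ i ∈ Finset.range (m + 1),
      (m.choose i : ℝ) • (matD s A i x * matD s B (m - i) x) := by
  ext p q
  simp only [matD, of_apply, mul_apply, Matrix.sum_apply, Matrix.smul_apply, smul_eq_mul]
  rw [iteratedDerivWithin_fun_sum hx hs fun r _ => (hA p r).mul (hB r q)]
  simp only [Finset.mul_sum]
  rw [Finset.sum_comm]
  refine Finset.sum_congr rfl fun r _ => ?_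
  rw [← Pi.mul_def, iteratedDerivWithin_mul hx hs (hA p r) (hB r q)]
  simp only [mul_assoc]

theorem bellD_zero (X : ℝ → Matrix (Fin n) (Fin n) ℝ) (x : ℝ) : BellD s X 0 x = 1 := by
  rw [BellD, Bell]

theorem bellD_succ (X : ℝ → Matrix (Fin n) (Fin n) ℝ) (m : ℕ) (x : ℝ) :
    BellD s X (m + 1) x = ∑ i ∈ Finset.range (m + 1),
      (m.choose i : ℝ) • (BellD s X i x * matD s X (m - i) x) := by
  rw [BellD, Bell]
  exact Fin.sum_univ_eq_sum_range
    (fun i => (m.choose i : ℝ) • (BellD s X i x * matD s X (m - i) x)) (m + 1)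

theorem matD_eq_mul_bellD {N : ℕ} {Y X : ℝ → Matrix (Fin n) (Fin n) ℝ}
    (hs : UniqueDiffOn ℝ s) (hY : ∀ p q, ContDiffOn ℝ N (fun t => Y t p q) s)
    (hX : ∀ p q, ContDiffOn ℝ N (fun t => X t p q) s)
    (hYX : Set.EqOn (matD s Y 1) (fun t => Y t * X t) s) :
    ∀ j ≤ N + 1, ∀ x ∈ s, matD s Y j x = Y x * BellD s X j x := by
  intro j
  induction j using Nat.strong_induction_on with
  | _ j ih =>
  intro hj x hx
  cases j with
  | zero => rw [matD_zero, bellD_zero, mul_one]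
  | succ m =>
    have hm : (m : WithTop ℕ∞) ≤ N := by exact_mod_cast (by omega : m ≤ N)
    calc matD s Y (m + 1) x = matD s (fun t => Y t * X t) m x := by
          rw [← matD_matD]; exact matD_congr hYX m hx
      _ = ∑ i ∈ Finset.range (m + 1),
            (m.choose i : ℝ) • (Y x * BellD s X i x * matD s X (m - i) x) := by
          rw [matD_mul hs hx (fun p q => (hY p q x hx).of_le hm)
            fun p q => (hX p q x hx).of_le hm]
          refine Finset.sum_congr rfl fun i hi => ?_
          have := Finset.mem_range.1 hi
          rw [ih i (by omega) (by omega) x hx]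
      _ = Y x * BellD s X (m + 1) x := by
          simp only [bellD_succ, Finset.mul_sum, mul_smul_comm, mul_assoc]

end MatrixDeriv

theorem stdB_eq_single {n i : ℕ} (hi : i < n) : stdB n (i + 1) = Pi.single ⟨i, hi⟩ 1 := by
  ext p
  simp [stdB, Pi.single_apply, Fin.ext_iff]

section Wronskian

variable {n : ℕ} {s : Set ℝ} {f : ℝ → Fin n → ℝ}

/-- The vector `a` of the statement, `0`-indexed:
`odeCoeff s f t i = a_{i+1}(t) = Φ_f^{[n-1-i]}(t)`. -/
noncomputable def odeCoeff (s : Set ℝ) (f : ℝ → Fin n → ℝ) : ℝ → Fin n → ℝ :=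
  fun t i => Phi s f (n - 1 - i) t

theorem matD_Yfun_apply (ℓ : ℕ) (x : ℝ) (p q : Fin n) :
    matD s (Yfun s f) ℓ x p q = iteratedDerivWithin (ℓ + (n - 1 - q)) (f · p) s x := by
  simp only [matD, Yfun, of_apply]
  rw [iteratedDerivWithin_iteratedDerivWithin]

theorem genW_comp_perm (k : Fin n → ℕ) (σ : Equiv.Perm (Fin n)) (x : ℝ) :
    genW s f (k ∘ σ) x = Equiv.Perm.sign σ * genW s f k x := by
  rw [genW, genW, ← det_permute']
  rfl

theorem dIdx_comp_cycleRange (q : Fin n) :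
    dIdx n 0 (n - 1 - q) ∘ Fin.cycleRange q = Function.update (wIdx n) q n := by
  have : NeZero n := NeZero.of_pos q.pos
  funext c
  rcases lt_trichotomy c q with h | rfl | h
  · have := Fin.coe_cycleRange_of_lt h
    simp only [Function.comp_apply, dIdx, wIdx, Function.update_of_ne h.ne, this,
      Nat.add_one_ne_zero, if_false]
    split_ifs <;> omega
  · simp [dIdx, Fin.cycleRange_self]
  · have hc : (c : ℕ) ≠ 0 := by omega
    simp only [Function.comp_apply, dIdx, wIdx, Function.update_of_ne h.ne',
      Fin.cycleRange_of_gt h, if_neg hc]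
    split_ifs <;> omega

theorem genW_update_wIdx (q : Fin n) (N : ℕ) (x : ℝ) :
    genW s f (Function.update (wIdx n) q N) x =
      ((Yfun s f x).updateCol q fun p => iteratedDerivWithin N (f · p) s x).det := by
  rw [genW]
  congr 1
  ext p c
  rcases eq_or_ne c q with rfl | h
  · simp
  · simp [h, Yfun, wIdx]

/- The numerator of `Φ_f^{[n-1-q]}` is the Wronskian with `f^{(n)}` moved from the front to
position `q`, a cyclic shift of sign `(-1)^q`. -/
theorem odeCoeff_eq_smul_cramer (x : ℝ) :
    odeCoeff s f x = (genW s f (wIdx n) x)⁻¹ •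
      cramer (Yfun s f x) fun p => iteratedDerivWithin n (f · p) s x := by
  funext q
  rw [Pi.smul_apply, cramer_apply, ← genW_update_wIdx, ← dIdx_comp_cycleRange, genW_comp_perm,
    Fin.sign_cycleRange, odeCoeff, Phi, smul_eq_mul, show n - (n - 1 - q) - 1 = q by omega]
  push_cast
  ring

theorem Yfun_mulVec_odeCoeff {x : ℝ} (hW : genW s f (wIdx n) x ≠ 0) :
    Yfun s f x *ᵥ odeCoeff s f x = fun p => iteratedDerivWithin n (f · p) s x := by
  rw [odeCoeff_eq_smul_cramer, mulVec_smul, mulVec_cramer, smul_smul]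
  exact inv_mul_cancel₀ hW ▸ one_smul ℝ _

theorem mul_colMat_apply (M : Matrix (Fin n) (Fin n) ℝ) (a : ℝ → Fin n → ℝ) (x : ℝ)
    (p q : Fin n) :
    (M * colMat a x) p q = if (q : ℕ) = 0 then (M *ᵥ a x) p else M p ⟨q - 1, by omega⟩ := by
  rw [mul_apply]
  split_ifs with h
  · simp [colMat, h, mulVec, dotProduct]
  · rw [Finset.sum_eq_single ⟨q - 1, by omega⟩]
    · simp [colMat, h, show (q : ℕ) - 1 + 1 = q by omega]
    · intro r _ hr
      simp only [colMat, of_apply, if_neg h, mul_ite, mul_one, mul_zero, ite_eq_right_iff]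
      exact fun hrq => absurd (Fin.ext (by simp; omega)) hr
    · simp

theorem matD_Yfun_one (hW : ∀ x ∈ s, genW s f (wIdx n) x ≠ 0) :
    Set.EqOn (matD s (Yfun s f) 1) (fun t => Yfun s f t * colMat (odeCoeff s f) t) s := by
  intro x hx
  ext p q
  beta_reduce
  rw [matD_Yfun_apply, mul_colMat_apply]
  split_ifs with h
  · rw [Yfun_mulVec_odeCoeff (hW x hx), h]
    congr 1
    omega
  · simp only [Yfun, of_apply]
    congr 1
    omega

theorem contDiffOn_colMat_apply {N : ℕ} {a : ℝ → Fin n → ℝ}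
    (ha : ∀ i, ContDiffOn ℝ N (fun t => a t i) s) (p q : Fin n) :
    ContDiffOn ℝ N (fun t => colMat a t p q) s := by
  simp only [colMat, of_apply]
  split_ifs
  exacts [ha p, contDiffOn_const, contDiffOn_const]

variable {m : ℕ} (hs : UniqueDiffOn ℝ s) (hf : ∀ p, ContDiffOn ℝ m (f · p) s)
include hs hf

theorem contDiffOn_Yfun_apply {N : ℕ} (hN : N + n ≤ m + 1) (p q : Fin n) :
    ContDiffOn ℝ N (fun t => Yfun s f t p q) s :=
  (hf p).iteratedDerivWithin hs (by omega)

theorem contDiffOn_genW {N : ℕ} {k : Fin n → ℕ} (hk : ∀ q, N + k q ≤ m) :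
    ContDiffOn ℝ N (genW s f k) s :=
  contDiffOn_det fun p q => (hf p).iteratedDerivWithin hs (hk q)

theorem contDiffOn_Phi {N : ℕ} (hN : N + n ≤ m) (hW : ∀ x ∈ s, genW s f (wIdx n) x ≠ 0)
    (j : ℕ) : ContDiffOn ℝ N (Phi s f j) s := by
  have hnum := contDiffOn_genW hs hf (N := N) (k := dIdx n 0 j) fun q => by
    simp only [dIdx]; split_ifs <;> omega
  have hden := contDiffOn_genW hs hf (N := N) (k := wIdx n) fun q => by simp only [wIdx]; omega
  exact (contDiffOn_const.mul hnum).div hden hW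

theorem matD_Yfun_eq_mul_bellD (hW : ∀ x ∈ s, genW s f (wIdx n) x ≠ 0) {ℓ : ℕ}
    (hℓ : ℓ ≤ m + 1 - n) {x : ℝ} (hx : x ∈ s) :
    matD s (Yfun s f) ℓ x = Yfun s f x * BellD s (colMat (odeCoeff s f)) ℓ x := by
  rcases Nat.eq_zero_or_pos ℓ with rfl | hℓ0
  · rw [matD_zero, bellD_zero, mul_one]
  · exact matD_eq_mul_bellD (N := m - n) hs (contDiffOn_Yfun_apply hs hf (by omega))
      (contDiffOn_colMat_apply fun i => contDiffOn_Phi hs hf (by omega) hW _)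
      (matD_Yfun_one hW) ℓ (by omega) x hx

theorem iteratedDerivWithin_eq_Yfun_mulVec_bellD {k : ℕ}
    (hW : ∀ x ∈ s, genW s f (wIdx n) x ≠ 0) (hk : k ≤ m) {x : ℝ} (hx : x ∈ s) :
    (fun p => iteratedDerivWithin k (f · p) s x) =
      Yfun s f x *ᵥ
        (BellD s (colMat (odeCoeff s f)) (k + 1 - n) x *ᵥ stdB n (n + (k + 1 - n) - k)) := by
  ext p
  have hi : n + (k + 1 - n) - k - 1 < n := by have := p.pos; omega
  rw [mulVec_mulVec, ← matD_Yfun_eq_mul_bellD hs hf hW (by omega) hx,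
    show n + (k + 1 - n) - k = n + (k + 1 - n) - k - 1 + 1 by omega, stdB_eq_single hi,
    mulVec_single_one, col_apply, matD_Yfun_apply]
  congr 1
  dsimp only
  omega

end Wronskian

theorem stmt_13_general (n m : ℕ) (I : Set ℝ) (hIo : IsOpen I) (f : ℝ → Fin n → ℝ)
    (hf : ∀ p : Fin n, ContDiffOn ℝ ((m : ℕ) : ℕ∞) (fun t => f t p) I)
    (hW : ∀ x ∈ I, genW I f (wIdx n) x ≠ 0) :
    ∀ k : Fin n → ℕ, (∀ q, k q ≤ m) → ∀ x ∈ I,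
      genW I f k x = genW I f (wIdx n) x *
        Matrix.det (Matrix.of fun p q =>
          (BellD I (colMat fun t i => Phi I f (n - 1 - (i : ℕ)) t) (k q + 1 - n) x).mulVec
            (stdB n (n + (k q + 1 - n) - k q)) p) := by
  intro k hk x hx
  have hcols : (of fun p q => iteratedDerivWithin (k q) (fun t => f t p) I x) =
      Yfun I f x * of fun p q =>
        (BellD I (colMat (odeCoeff I f)) (k q + 1 - n) x *ᵥ
          stdB n (n + (k q + 1 - n) - k q)) p := by
    ext p q
    exact congrFun
      (iteratedDerivWithin_eq_Yfun_mulVec_bellD hIo.uniqueDiffOn hf hW (hk q) hx) p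
  rw [genW, hcols, det_mul]
  rfl

/-- for an `m`-times continuously differentiable `f` (`m ≥ n`) with
nonvanishing Wronskian, defining `a_j := Φ_f^{[n-j]}`, the generalized Wronskian formula
`W_f^k = W_f · det(B_{ℓ_1}(X_a,…) e_{n+ℓ_1-k_1} | … | B_{ℓ_n}(X_a,…) e_{n+ℓ_n-k_n})`
holds on `I` whenever all `k_i ≤ m`, where `ℓ_i = max(k_i-n+1, 0)`. -/
theorem stmt_13 (n m : ℕ) (hn : 0 < n) (hmn : n ≤ m) (I : Set ℝ) (hIo : IsOpen I)
    (hIne : I.Nonempty) (hIc : I.OrdConnected) (f : ℝ → Fin n → ℝ)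
    (hf : ∀ p : Fin n, ContDiffOn ℝ ((m : ℕ) : ℕ∞) (fun t => f t p) I)
    (hW : ∀ x ∈ I, genW I f (wIdx n) x ≠ 0) :
    ∀ k : Fin n → ℕ, (∀ q, k q ≤ m) → ∀ x ∈ I,
      genW I f k x = genW I f (wIdx n) x *
        Matrix.det (Matrix.of fun p q =>
          (BellD I (colMat fun t i => Phi I f (n - 1 - (i : ℕ)) t) (k q + 1 - n) x).mulVec
            (stdB n (n + (k q + 1 - n) - k q)) p) :=
  stmt_13_general n m I hIo f hf hW
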